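/- arXiv:2005.12436 — 4 statements merged into one kernel-verified Lean document; each statement's English description precedes it below -/
import Mathlib

section
/- (Dimension of the sum in an (N,ℓ)-lattice) Fix an integer step size ℓ, a function N : ℤ → ℕ, integers t and i ≥ 1. Let V be a finite-dimensional vector space over a field k, let B be a basis of V, and let U_1, …, U_i be subspaces of V such that each U_j is the span of some subset B_j ⊆ B, and such that dim(⋂_{j∈I} U_j) = N(t - |I|·ℓ) for every nonempty subset I ⊆ {1,…,i}. Then dim(U_1 + ⋯ + U_i) = N(t) - Σ_{j=0}^{i} (-1)^j · C(i,j) · N(t - j·ℓ), i.e., dim(U_1 + ⋯ + U_i) = N(t) - (∇^i N)(t). -/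
/-- The backward difference operator with step size `ℓ`. -/
def bdiff (ℓ : ℤ) (f : ℤ → ℤ) : ℤ → ℤ := fun t => f t - f (t - ℓ)

/-!
Spans of subsets of a basis form a lattice isomorphic to the lattice of those subsets: sums and
intersections of the `U_j` are the spans of unions and intersections of the index sets, and
dimensions are cardinalities. The formula is then inclusion–exclusion for `⋃ s_j`, in which every
`|I|`-fold intersection has size `N (t - |I| ℓ)`, so the terms with `|I| = j` collapse to
`C(i, j) · N (t - j ℓ)`.
-/

open Finset Module Submodule

namespace Module.Basis

variable {ι R M : Type*} [Semiring R] [AddCommMonoid M] [Module R M] (b : Basis ι R M)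

theorem finrank_span_image_finset [StrongRankCondition R] (u : Finset ι) :
    finrank R (span R (b '' u)) = #u := by
  classical
  have := nontrivial_of_invariantBasisNumber R
  rw [← coe_image, finrank_span_finset_eq_card, card_image_of_injective _ b.injective]
  simpa using (b.linearIndependent.linearIndepOn u).id_image

theorem iInf_span_image {κ : Sort*} (s : κ → Set ι) :
    ⨅ j, span R (b '' s j) = span R (b '' ⋂ j, s j) := by
  ext x
  simp only [mem_iInf, mem_span_image, Set.subset_iInter_iff]

theorem biInf_span_image_finset [DecidableEq ι] {κ : Type*} (S : κ → Finset ι) (I : Finset κ)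
    (hI : I.Nonempty) : ⨅ j ∈ I, span R (b '' S j) = span R (b '' ↑(I.inf' hI S)) := by
  simp only [b.iInf_span_image]
  congr 2
  ext a
  simp

end Module.Basis

namespace Finset

theorem sum_filter_nonempty_powerset_neg_one_pow_mul {β : Type*} (x : Finset β) (g : ℕ → ℤ) :
    ∑ I ∈ x.powerset with I.Nonempty, (-1) ^ (#I + 1) * g #I =
      g 0 - ∑ j ∈ range (#x + 1), (-1) ^ j * (#x).choose j * g j := by
  classical
  simp only [nonempty_iff_ne_empty, filter_ne', sum_erase_eq_sub (empty_mem_powerset x),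
    sum_powerset_apply_card (fun n => (-1) ^ (n + 1) * g n), card_empty, nsmul_eq_mul]
  have hterm : ∀ j, ((#x).choose j : ℤ) * ((-1) ^ (j + 1) * g j) =
      -((-1) ^ j * (#x).choose j * g j) := fun j => by ring
  simp only [hterm, sum_neg_distrib]
  ring

theorem card_biUnion_of_card_inf'_eq {κ α : Type*} [Fintype κ] [DecidableEq α]
    (S : κ → Finset α) (g : ℕ → ℤ)
    (hS : ∀ (I : Finset κ) (hI : I.Nonempty), (#(I.inf' hI S) : ℤ) = g #I) :
    (#(univ.biUnion S) : ℤ) =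
      g 0 - ∑ j ∈ range (Fintype.card κ + 1), (-1) ^ j * (Fintype.card κ).choose j * g j := by
  rw [inclusion_exclusion_card_biUnion, ← card_univ,
    ← sum_filter_nonempty_powerset_neg_one_pow_mul]
  simp only [hS]
  exact sum_coe_sort _ (fun I => (-1) ^ (#I + 1) * g #I)

end Finset

theorem dim_sum_N_ell_lattice_general (ℓ : ℤ) (N : ℤ → ℕ) (t : ℤ) (i : ℕ)
    {k V : Type*} [Field k] [AddCommGroup V] [Module k V] [FiniteDimensional k V]
    {ι : Type*} (b : Module.Basis ι k V) (s : Fin i → Set ι)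
    (U : Fin i → Submodule k V)
    (hU : ∀ j, U j = Submodule.span k (⇑b '' s j))
    (hdim : ∀ I : Finset (Fin i), I.Nonempty →
      (Module.finrank k ↥(⨅ j ∈ I, U j) : ℤ) = N (t - (I.card : ℤ) * ℓ)) :
    (Module.finrank k ↥(⨆ j, U j) : ℤ) =
      (N t : ℤ) - ∑ j ∈ Finset.range (i + 1),
        (-1 : ℤ) ^ j * (i.choose j : ℤ) * (N (t - (j : ℤ) * ℓ) : ℤ) := by
  classical
  have : Fintype ι := FiniteDimensional.fintypeBasisIndex b
  set S : Fin i → Finset ι := fun j => (s j).toFinset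
  obtain rfl : U = fun j => span k (b '' S j) := funext fun j => by simpa [S] using hU j
  have hsup : ⨆ j, span k (b '' S j) = span k (b '' ↑(univ.biUnion S)) := by
    simp only [coe_biUnion, coe_univ, Set.mem_univ, Set.iUnion_true, Set.image_iUnion,
      span_iUnion]
  have hinf (I : Finset (Fin i)) (hI : I.Nonempty) :
      (#(I.inf' hI S) : ℤ) = N (t - #I * ℓ) := by
    rw [← hdim I hI, b.biInf_span_image_finset S I hI, b.finrank_span_image_finset]
  rw [hsup, b.finrank_span_image_finset,
    card_biUnion_of_card_inf'_eq S (fun j => N (t - j * ℓ)) hinf]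
  simp only [Fintype.card_fin, Nat.cast_zero, zero_mul, sub_zero]

/-- Dimension of the sum of the subspaces in an `(N, ℓ)`-lattice:
`dim (U_1 + ⋯ + U_i) = N t - (∇^i N) t`. -/
theorem dim_sum_N_ell_lattice (ℓ : ℤ) (N : ℤ → ℕ) (t : ℤ) (i : ℕ) (hi : 1 ≤ i)
    {k V : Type*} [Field k] [AddCommGroup V] [Module k V] [FiniteDimensional k V]
    {ι : Type*} (b : Module.Basis ι k V) (s : Fin i → Set ι)
    (U : Fin i → Submodule k V)
    (hU : ∀ j, U j = Submodule.span k (⇑b '' s j))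
    (hdim : ∀ I : Finset (Fin i), I.Nonempty →
      (Module.finrank k ↥(⨅ j ∈ I, U j) : ℤ) = N (t - (I.card : ℤ) * ℓ)) :
    (Module.finrank k ↥(⨆ j, U j) : ℤ) =
      (N t : ℤ) - ∑ j ∈ Finset.range (i + 1),
        (-1 : ℤ) ^ j * (i.choose j : ℤ) * (N (t - (j : ℤ) * ℓ) : ℤ) :=
  dim_sum_N_ell_lattice_general ℓ N t i b s U hU hdim
end

section
/- (Equiabundance) Fix an integer step size ℓ ≥ 1 and an integer K_0 ≥ 1. Suppose N : ℤ → ℚ is ℓ-quasipolynomial of degree K_0 with leading coefficient c_N, m : ℤ → ℚ is ℓ-quasipolynomial of degree 1 (ℓ-quasilinear) with leading coefficient c_m ≠ 0, and s : ℤ → ℚ is ℓ-quasipolynomial of degree K_0 - 1 with leading coefficient c_N / c_m. Then for every t ∈ ℤ, N(t) - (∇^{K_0} N)(t) + K_0·(∇ m)(t)·(∇^{K_0 - 1} s)(t - ℓ) + m(t)·(∇^{K_0} s)(t) = N(t). -/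
/-- The backward difference operator with step size `ℓ`, for `ℚ`-valued functions on `ℤ`. -/
def bdiffQ (ℓ : ℤ) (f : ℤ → ℚ) : ℤ → ℚ := fun t => f t - f (t - ℓ)

/-- `f : ℤ → ℚ` is `ℓ`-quasipolynomial of degree `d` with leading coefficient `a`. -/
def IsQuasiPolyQ (ℓ : ℕ) (d : ℕ) (a : ℚ) (f : ℤ → ℚ) : Prop :=
  ∃ p : ℤ → Polynomial ℚ,
    (∀ r : ℤ, (p r).degree = (d : ℕ) ∧ (p r).leadingCoeff = a) ∧
    ∀ t : ℤ, f t = (p (t % (ℓ : ℤ))).eval (t : ℚ)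

/-!
On each residue class mod `ℓ` a quasipolynomial is a polynomial, and `∇` acts there as the
polynomial difference `p ↦ p - p(X - ℓ)`, which lowers the degree by one and multiplies the
top coefficient by `deg p · ℓ`. Hence `∇^d` of a quasipolynomial of degree `d` with leading
coefficient `a` is the constant `a · d! · ℓ^d`, and higher differences vanish. The identity
then reduces to `c_N K₀! ℓ^{K₀} = K₀ · c_m ℓ · (c_N / c_m) (K₀ - 1)! ℓ^{K₀ - 1}`.
-/

open Polynomial
open scoped Nat

namespace Polynomial

variable {R : Type*} [CommRing R]

noncomputable def bdiff (h : R) (p : R[X]) : R[X] :=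
  p - p.comp (X - C h)

theorem eval_bdiff (h : R) (p : R[X]) (x : R) :
    (bdiff h p).eval x = p.eval x - p.eval (x - h) := by
  simp [bdiff]

theorem coeff_bdiff (h : R) (p : R[X]) (n : ℕ) (hp : p.natDegree ≤ n + 1) :
    (bdiff h p).coeff n = (n + 1) * p.coeff (n + 1) * h := by
  have hcomp : p.comp (X - C h) = taylor (-h) p := by
    rw [taylor_apply, map_neg, sub_eq_add_neg]
  -- `hasseDeriv n p` has degree at most one, so its value at `-h` is read off two coefficients.
  have hlin : (hasseDeriv n p).eval (-h) =
      (hasseDeriv n p).coeff 0 + (hasseDeriv n p).coeff 1 * (-h) := by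
    have := natDegree_hasseDeriv_le p n
    rw [eval_eq_sum_range' (n := 2) (by omega)]
    simp [Finset.sum_range_succ]
  rw [bdiff, coeff_sub, hcomp, taylor_coeff, hlin, hasseDeriv_coeff, hasseDeriv_coeff]
  simp only [zero_add, Nat.choose_self, Nat.cast_one, one_mul, Nat.add_comm 1 n,
    Nat.choose_succ_self_right]
  push_cast
  ring

theorem natDegree_bdiff_le (h : R) (p : R[X]) (n : ℕ) (hp : p.natDegree ≤ n + 1) :
    (bdiff h p).natDegree ≤ n := by
  rw [natDegree_le_iff_coeff_eq_zero]
  intro k hk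
  rw [coeff_bdiff h p k (by omega),
    coeff_eq_zero_of_natDegree_lt (by omega : p.natDegree < k + 1), mul_zero, zero_mul]

theorem eval_bdiff_iter (h : R) (n : ℕ) (p : R[X]) (hp : p.natDegree ≤ n) (x : R) :
    ((bdiff h)^[n] p).eval x = p.coeff n * n ! * h ^ n := by
  induction n generalizing p with
  | zero => rw [eq_C_of_natDegree_le_zero hp]; simp
  | succ n ih =>
    rw [Function.iterate_succ_apply, ih _ (natDegree_bdiff_le h p n hp), coeff_bdiff h p n hp,
      Nat.factorial_succ]
    push_cast
    ring

end Polynomial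

theorem bdiffQ_iter_eq_eval_bdiff_iter (ℓ : ℤ) (n : ℕ) (f : ℤ → ℚ) (p : ℤ → ℚ[X])
    (hf : ∀ t, f t = (p (t % ℓ)).eval (t : ℚ)) (t : ℤ) :
    (bdiffQ ℓ)^[n] f t = ((bdiff (ℓ : ℚ))^[n] (p (t % ℓ))).eval (t : ℚ) := by
  induction n generalizing f p with
  | zero => exact hf t
  | succ n ih =>
    have hstep : ∀ u, bdiffQ ℓ f u = (bdiff (ℓ : ℚ) (p (u % ℓ))).eval (u : ℚ) := by
      intro u
      rw [bdiffQ, eval_bdiff, hf u, hf (u - ℓ), Int.sub_emod_right]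
      push_cast
      rfl
    rw [Function.iterate_succ_apply, ih _ (fun r => bdiff (ℓ : ℚ) (p r)) hstep,
      ← Function.iterate_succ_apply]

namespace IsQuasiPolyQ

variable {ℓ d : ℕ} {a : ℚ} {f : ℤ → ℚ}

theorem bdiffQ_iter_self (hf : IsQuasiPolyQ ℓ d a f) (t : ℤ) :
    (bdiffQ (ℓ : ℤ))^[d] f t = a * d ! * (ℓ : ℚ) ^ d := by
  obtain ⟨p, hp, hfp⟩ := hf
  have hdeg := natDegree_eq_of_degree_eq_some (hp (t % ℓ)).1
  rw [bdiffQ_iter_eq_eval_bdiff_iter _ d f p hfp, eval_bdiff_iter _ d _ hdeg.le, ← hdeg,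
    ← leadingCoeff, (hp _).2, hdeg, Int.cast_natCast]

theorem bdiffQ_iter_eq_zero (hf : IsQuasiPolyQ ℓ d a f) {n : ℕ} (hn : d < n) (t : ℤ) :
    (bdiffQ (ℓ : ℤ))^[n] f t = 0 := by
  obtain ⟨p, hp, hfp⟩ := hf
  have hdeg := natDegree_eq_of_degree_eq_some (hp (t % ℓ)).1
  rw [bdiffQ_iter_eq_eval_bdiff_iter _ n f p hfp, eval_bdiff_iter _ n _ (by omega),
    coeff_eq_zero_of_natDegree_lt (by omega), zero_mul, zero_mul]

end IsQuasiPolyQ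

theorem equiabundant_general (ℓ : ℕ) (K₀ : ℕ) (hK : 1 ≤ K₀)
    (N m s : ℤ → ℚ) (cN cm : ℚ) (hcm : cm ≠ 0)
    (hN : IsQuasiPolyQ ℓ K₀ cN N)
    (hm : IsQuasiPolyQ ℓ 1 cm m)
    (hs : IsQuasiPolyQ ℓ (K₀ - 1) (cN / cm) s) (t : ℤ) :
    N t - (bdiffQ (ℓ : ℤ))^[K₀] N t
      + (K₀ : ℚ) * bdiffQ (ℓ : ℤ) m t * (bdiffQ (ℓ : ℤ))^[K₀ - 1] s (t - (ℓ : ℤ))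
      + m t * (bdiffQ (ℓ : ℤ))^[K₀] s t = N t := by
  obtain ⟨k, rfl⟩ : ∃ k, K₀ = k + 1 := ⟨K₀ - 1, by omega⟩
  have hdiff_m : bdiffQ (ℓ : ℤ) m t = cm * ℓ := by simpa using hm.bdiffQ_iter_self t
  rw [hN.bdiffQ_iter_self, hdiff_m, hs.bdiffQ_iter_self, hs.bdiffQ_iter_eq_zero (by omega),
    Nat.add_sub_cancel, Nat.factorial_succ]
  push_cast
  field_simp
  ring

/-- Equiabundance: for the chosen quasipolynomial `s`, the statement `A_{K₀}(t)` is
equiabundant, i.e. `a_{K₀}(t) = N(t)`. -/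
theorem equiabundant (ℓ : ℕ) (hℓ : 1 ≤ ℓ) (K₀ : ℕ) (hK : 1 ≤ K₀)
    (N m s : ℤ → ℚ) (cN cm : ℚ) (hcm : cm ≠ 0)
    (hN : IsQuasiPolyQ ℓ K₀ cN N)
    (hm : IsQuasiPolyQ ℓ 1 cm m)
    (hs : IsQuasiPolyQ ℓ (K₀ - 1) (cN / cm) s) (t : ℤ) :
    N t - (bdiffQ (ℓ : ℤ))^[K₀] N t
      + (K₀ : ℚ) * bdiffQ (ℓ : ℤ) m t * (bdiffQ (ℓ : ℤ))^[K₀ - 1] s (t - (ℓ : ℤ))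
      + m t * (bdiffQ (ℓ : ℤ))^[K₀] s t = N t :=
  equiabundant_general ℓ K₀ hK N m s cN cm hcm hN hm hs t
end

section
/- (The 27-quasiquadratic formula computes the critical number of points for quaternary forms) Define a : ℕ → ℤ by a(t) = a(r) where r is the remainder of t modulo 27 and the values a(r) for r = 0, 1, …, 26 are, in order: 0, -10, 4, -12, -4, 1, 3, 2, -2, -9, 8, -5, 6, -13, -8, -6, -7, -11, 9, -1, 13, -3, 5, 10, 12, 11, 7. Then for every natural number t: (i) 54 divides 3t² + 17t + 2a(t), so that s₁(t) := (3t² + 17t + 2a(t))/54 is an integer; and (ii) s₁(t) + 1 = ⌈C(t+3, 3) / (3t + 1)⌉. -/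
/-!
Write `N(t) = 3t² + 17t + 2a(t)`. Its residue modulo 54 depends only on `t mod 54`, so
`54 ∣ N` is a finite check, and `s₁ = N/54` is exact. Since `6·C(t+3,3) = (t+1)(t+2)(t+3)`,
a direct expansion gives
`324·(C(t+3,3) - s₁(3t+1)) = 12·((41 - 3a)t + 27 - a)` and
`324·((s₁+1)(3t+1) - C(t+3,3)) = 12·((40 + 3a)t + a)`.
As `|a| ≤ 13` the first is positive, and the second is nonnegative because its slope
`40 + 3a` is positive and it is nonnegative at `t mod 27` (a finite check).
-/

/-- The values `a(0), a(1), …, a(26)` from Table 3. -/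
def aVals : List ℤ :=
  [0, -10, 4, -12, -4, 1, 3, 2, -2, -9, 8, -5, 6, -13, -8, -6, -7, -11, 9, -1,
   13, -3, 5, 10, 12, 11, 7]

/-- `a(t)` depends only on the remainder of `t` modulo 27. -/
def aQ (t : ℕ) : ℤ := aVals.getD (t % 27) 0

def s₁ (t : ℕ) : ℤ := (3 * (t : ℤ) ^ 2 + 17 * (t : ℤ) + 2 * aQ t) / 54

theorem Nat.six_mul_choose_three (n : ℕ) :
    6 * (n + 3).choose 3 = (n + 1) * (n + 2) * (n + 3) := by
  have h := Nat.descFactorial_eq_factorial_mul_choose (n + 3) 3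
  have hdesc : (n + 3).descFactorial 3 = (n + 1) * ((n + 2) * ((n + 3) * 1)) := rfl
  rw [hdesc, show Nat.factorial 3 = 6 from rfl] at h
  rw [← h]
  ring

theorem Int.ceil_div_eq_of_mul_lt_of_le {K : Type*} [Field K] [LinearOrder K]
    [IsStrictOrderedRing K] [FloorRing K] {c d : K} {k : ℤ} (hd : 0 < d)
    (hlt : k * d < c) (hle : c ≤ (k + 1) * d) : ⌈c / d⌉ = k + 1 := by
  rw [Int.ceil_eq_iff, Int.cast_add, Int.cast_one, add_sub_cancel_right,
    lt_div_iff₀ hd, div_le_iff₀ hd]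
  exact ⟨hlt, hle⟩

theorem aQ_mod_27 (t : ℕ) : aQ (t % 27) = aQ t := by
  rw [aQ, aQ, Nat.mod_mod]

theorem abs_aQ_le (t : ℕ) : |aQ t| ≤ 13 := by
  have h : ∀ r : ℕ, r < 27 → |aQ r| ≤ 13 := by decide
  rw [← aQ_mod_27]
  exact h _ (Nat.mod_lt _ (by norm_num))

theorem aQ_slope_nonneg (t : ℕ) : 0 ≤ (40 + 3 * aQ t) * t + aQ t := by
  have h : ∀ r : ℕ, r < 27 → 0 ≤ (40 + 3 * aQ r) * r + aQ r := by decide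
  have hr := h (t % 27) (Nat.mod_lt _ (by norm_num))
  rw [aQ_mod_27] at hr
  have hmod : ((t % 27 : ℕ) : ℤ) ≤ t := by exact_mod_cast Nat.mod_le t 27
  have hslope : 0 ≤ 40 + 3 * aQ t := by linarith [neg_abs_le (aQ t), abs_aQ_le t]
  nlinarith

theorem dvd_s₁_numerator (t : ℕ) : (54 : ℤ) ∣ 3 * (t : ℤ) ^ 2 + 17 * (t : ℤ) + 2 * aQ t := by
  have h : ∀ r : ℕ, r < 54 → (54 : ℤ) ∣ 3 * (r : ℤ) ^ 2 + 17 * (r : ℤ) + 2 * aQ r := by decide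
  have hr := h (t % 54) (Nat.mod_lt _ (by norm_num))
  rw [← aQ_mod_27 (t % 54), Nat.mod_mod_of_dvd t (by norm_num : 27 ∣ 54), aQ_mod_27] at hr
  have ht : ((t % 54 : ℕ) : ℤ) ≡ t [ZMOD 54] := by
    rw [Int.natCast_mod]
    exact Int.mod_modEq _ _
  exact (Int.ModEq.dvd_iff (by gcongr)).mp hr

theorem mul_s₁_eq (t : ℕ) : 54 * s₁ t = 3 * (t : ℤ) ^ 2 + 17 * (t : ℤ) + 2 * aQ t :=
  Int.mul_ediv_cancel' (dvd_s₁_numerator t)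

theorem s₁_mul_lt_choose (t : ℕ) : s₁ t * (3 * t + 1) < ((t + 3).choose 3 : ℤ) := by
  have hC : 6 * ((t + 3).choose 3 : ℤ) = (t + 1) * (t + 2) * (t + 3) := by
    exact_mod_cast Nat.six_mul_choose_three t
  have key : 324 * (((t + 3).choose 3 : ℤ) - s₁ t * (3 * t + 1))
      = 12 * ((41 - 3 * aQ t) * t + 27 - aQ t) := by
    linear_combination 54 * hC - 6 * (3 * (t : ℤ) + 1) * mul_s₁_eq t
  have ha := abs_le.mp (abs_aQ_le t)
  nlinarith [mul_nonneg (show (0 : ℤ) ≤ 41 - 3 * aQ t by linarith) (Int.natCast_nonneg t)]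

theorem choose_le_s₁_add_one_mul (t : ℕ) :
    ((t + 3).choose 3 : ℤ) ≤ (s₁ t + 1) * (3 * t + 1) := by
  have hC : 6 * ((t + 3).choose 3 : ℤ) = (t + 1) * (t + 2) * (t + 3) := by
    exact_mod_cast Nat.six_mul_choose_three t
  have key : 324 * ((s₁ t + 1) * (3 * t + 1) - ((t + 3).choose 3 : ℤ))
      = 12 * ((40 + 3 * aQ t) * t + aQ t) := by
    linear_combination 6 * (3 * (t : ℤ) + 1) * mul_s₁_eq t - 54 * hC
  nlinarith [aQ_slope_nonneg t]

/-- The 27-quasiquadratic formula computes the critical number of points for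
quaternary forms: `s₁(t) = (3t² + 17t + 2a(t))/54` is an integer and
`s₁(t) + 1 = ⌈C(t+3,3)/(3t+1)⌉`. -/
theorem quaternary_critical_value (t : ℕ) :
    (54 : ℤ) ∣ (3 * (t : ℤ) ^ 2 + 17 * (t : ℤ) + 2 * aQ t) ∧
    (3 * (t : ℤ) ^ 2 + 17 * (t : ℤ) + 2 * aQ t) / 54 + 1
      = ⌈(((t + 3).choose 3 : ℚ)) / (3 * (t : ℚ) + 1)⌉ := by
  refine ⟨dvd_s₁_numerator t, (Int.ceil_div_eq_of_mul_lt_of_le (by positivity) ?_ ?_).symm⟩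
  · exact_mod_cast s₁_mul_lt_choose t
  · exact_mod_cast choose_le_s₁_add_one_mul t
end

section
/- (Pairwise intersections of the tangent-space summands of the Chow variety) Let k be a field, n ≥ 1, d ≥ 2, and let ℓ_1, …, ℓ_d be nonzero homogeneous polynomials of degree 1 in k[x_0,…,x_n] that are pairwise non-proportional (ℓ_i is not a scalar multiple of ℓ_j for i ≠ j). Let L denote the subspace of homogeneous polynomials of degree 1. Then for all j ≠ k in {1,…,d}, the intersection of the subspaces (∏_{i≠j} ℓ_i)·L and (∏_{i≠k} ℓ_i)·L of the degree-d homogeneous component equals the one-dimensional subspace spanned by ℓ_1·ℓ_2·⋯·ℓ_d. -/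
/-!
Write `g` for the product of the linear forms other than `ℓ_j, ℓ_k`. A common element
`g ℓ_k v = g ℓ_j w` of the two summands gives `ℓ_k v = ℓ_j w` after cancelling `g`. Linear forms
are prime, and `ℓ_j ∤ ℓ_k` since the two are not proportional, so `ℓ_j ∣ v`; comparing degrees,
`v` is a scalar multiple of `ℓ_j`, i.e. the element is a multiple of `ℓ_1 ⋯ ℓ_d`.
-/

namespace MvPolynomial

variable {σ R k : Type*}

theorem exists_eq_smul_of_dvd_of_totalDegree_le [CommRing R] [IsDomain R]
    {a v : MvPolynomial σ R} (ha : a ≠ 0) (hdeg : v.totalDegree ≤ a.totalDegree) (hdvd : a ∣ v) :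
    ∃ c : R, v = c • a := by
  obtain ⟨u, rfl⟩ := hdvd
  obtain rfl | hu := eq_or_ne u 0
  · exact ⟨0, by simp⟩
  rw [totalDegree_mul_of_isDomain ha hu] at hdeg
  obtain ⟨c, rfl⟩ : ∃ c, u = C c := ⟨_, totalDegree_eq_zero_iff_eq_C.mp (by omega)⟩
  exact ⟨c, by rw [smul_eq_C_mul, mul_comm]⟩

theorem IsHomogeneous.prime_of_one [Field k] {a : MvPolynomial σ k}
    (ha : a.IsHomogeneous 1) (ha0 : a ≠ 0) : Prime a := by
  refine (irreducible_of_totalDegree_eq_one (ha.totalDegree ha0) fun x hx => ?_).prime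
  obtain ⟨m, hm⟩ := ne_zero_iff.mp ha0
  exact isUnit_iff_ne_zero.mpr fun hx0 => hm (zero_dvd_iff.mp (hx0 ▸ hx m))

theorem map_mulLeft_homogeneousSubmodule_one_inf [Field k] {a b g : MvPolynomial σ k}
    (ha : a.IsHomogeneous 1) (ha0 : a ≠ 0) (hb : b.IsHomogeneous 1) (hg : g ≠ 0)
    (hab : ∀ c : k, b ≠ c • a) :
    (homogeneousSubmodule σ k 1).map (LinearMap.mulLeft k (b * g)) ⊓
        (homogeneousSubmodule σ k 1).map (LinearMap.mulLeft k (a * g)) =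
      Submodule.span k {a * b * g} := by
  apply le_antisymm
  · rintro p ⟨⟨v, hv, rfl⟩, ⟨w, -, hvw⟩⟩
    simp only [LinearMap.mulLeft_apply] at hvw ⊢
    have hbv : a ∣ b * v := ⟨w, mul_right_cancel₀ hg (by linear_combination -hvw)⟩
    have ha1 : a.totalDegree = 1 := ha.totalDegree ha0
    have hab' : ¬ a ∣ b := fun h =>
      (exists_eq_smul_of_dvd_of_totalDegree_le ha0 (ha1 ▸ hb.totalDegree_le) h).elim hab
    obtain ⟨c, rfl⟩ := exists_eq_smul_of_dvd_of_totalDegree_le ha0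
      (ha1 ▸ (mem_homogeneousSubmodule 1 v).mp hv |>.totalDegree_le)
      (((ha.prime_of_one ha0).dvd_or_dvd hbv).resolve_left hab')
    exact Submodule.mem_span_singleton.mpr ⟨c, by simp only [smul_eq_C_mul]; ring⟩
  · rw [Submodule.span_le, Set.singleton_subset_iff]
    exact ⟨⟨a, ha, by simp only [LinearMap.mulLeft_apply]; ring⟩,
      ⟨b, hb, by simp only [LinearMap.mulLeft_apply]; ring⟩⟩

end MvPolynomial

theorem chow_tangent_summand_intersections_general
    {k : Type*} [Field k] (n d : ℕ)
    (l : Fin d → MvPolynomial (Fin (n + 1)) k)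
    (hne : ∀ i, l i ≠ 0)
    (hhom : ∀ i, (l i).IsHomogeneous 1)
    (hprop : ∀ i j, i ≠ j → ∀ c : k, l i ≠ c • l j) :
    ∀ j j' : Fin d, j ≠ j' →
      Submodule.map (LinearMap.mulLeft k (∏ i ∈ Finset.univ.erase j, l i))
          (MvPolynomial.homogeneousSubmodule (Fin (n + 1)) k 1) ⊓
        Submodule.map (LinearMap.mulLeft k (∏ i ∈ Finset.univ.erase j', l i))
          (MvPolynomial.homogeneousSubmodule (Fin (n + 1)) k 1)
      = Submodule.span k {∏ i, l i} := by
  intro j j' hjj'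
  set g := ∏ i ∈ (Finset.univ.erase j).erase j', l i
  have hg : g ≠ 0 := Finset.prod_ne_zero_iff.mpr fun i _ => hne i
  have hj : ∏ i ∈ Finset.univ.erase j, l i = l j' * g :=
    (Finset.mul_prod_erase _ _ (Finset.mem_erase.mpr ⟨hjj'.symm, Finset.mem_univ _⟩)).symm
  have hj' : ∏ i ∈ Finset.univ.erase j', l i = l j * g := by
    rw [show g = ∏ i ∈ (Finset.univ.erase j').erase j, l i by rw [Finset.erase_right_comm]]
    exact (Finset.mul_prod_erase _ _ (Finset.mem_erase.mpr ⟨hjj', Finset.mem_univ _⟩)).symm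
  have hall : ∏ i, l i = l j * l j' * g := by
    rw [← Finset.mul_prod_erase _ _ (Finset.mem_univ j), hj, mul_assoc]
  rw [hj, hj', hall]
  exact MvPolynomial.map_mulLeft_homogeneousSubmodule_one_inf (hhom j) (hne j) (hhom j') hg
    (hprop j' j hjj'.symm)

/-- Pairwise intersections of the tangent-space summands of the Chow variety:
for pairwise non-proportional nonzero linear forms `ℓ_1, …, ℓ_d`, the subspaces
`(∏_{i≠j} ℓ_i)·L` and `(∏_{i≠k} ℓ_i)·L` intersect exactly in the line spanned
by `ℓ_1 ⋯ ℓ_d`. -/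
theorem chow_tangent_summand_intersections
    {k : Type*} [Field k] (n d : ℕ) (hn : 1 ≤ n) (hd : 2 ≤ d)
    (l : Fin d → MvPolynomial (Fin (n + 1)) k)
    (hne : ∀ i, l i ≠ 0)
    (hhom : ∀ i, (l i).IsHomogeneous 1)
    (hprop : ∀ i j, i ≠ j → ∀ c : k, l i ≠ c • l j) :
    ∀ j j' : Fin d, j ≠ j' →
      Submodule.map (LinearMap.mulLeft k (∏ i ∈ Finset.univ.erase j, l i))
          (MvPolynomial.homogeneousSubmodule (Fin (n + 1)) k 1) ⊓
        Submodule.map (LinearMap.mulLeft k (∏ i ∈ Finset.univ.erase j', l i))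
          (MvPolynomial.homogeneousSubmodule (Fin (n + 1)) k 1)
      = Submodule.span k {∏ i, l i} :=
  chow_tangent_summand_intersections_general n d l hne hhom hprop
end
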